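/- arXiv:math/0612430 — 2 statements merged into one kernel-verified Lean document; each statement's English description precedes it below -/
import Mathlib

section
/- Expansion of the Rogers–Szegő polynomials in terms of the bivariate ones: for every q ∈ ℂ with |q| < 1, all x, y ∈ ℂ, and every integer n ≥ 0, h_n(x|q) = ∑_{k=0}^{n} [n,k]_q y^k h_{n-k}(x,y|q). -/
/-- The q-shifted factorial `(a;q)_n = ∏_{k=0}^{n-1} (1 - a q^k)`. -/
noncomputable def qPoch (a q : ℂ) (n : ℕ) : ℂ :=
  ∏ k ∈ Finset.range n, (1 - a * q ^ k)

/-- The infinite q-shifted factorial `(a;q)_∞ = ∏_{k=0}^{∞} (1 - a q^k)`. -/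
noncomputable def qPochInf (a q : ℂ) : ℂ :=
  ∏' k : ℕ, (1 - a * q ^ k)

/-- The Gaussian binomial coefficient `[n,k]_q`. -/
noncomputable def qBinom (q : ℂ) (n k : ℕ) : ℂ :=
  qPoch q q n / (qPoch q q k * qPoch q q (n - k))

/-- The Cauchy polynomial `P_n(x,y) = ∏_{k=0}^{n-1} (x - q^k y)`. -/
noncomputable def cauchyP (q x y : ℂ) (n : ℕ) : ℂ :=
  ∏ k ∈ Finset.range n, (x - q ^ k * y)

/-- The bivariate Rogers–Szegő polynomial `h_n(x,y|q)`. -/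
noncomputable def hRS2 (q x y : ℂ) (n : ℕ) : ℂ :=
  ∑ k ∈ Finset.range (n + 1), qBinom q n k * cauchyP q x y k

/-- The Rogers–Szegő polynomial `h_n(x|q)`. -/
noncomputable def hRS (q x : ℂ) (n : ℕ) : ℂ :=
  ∑ k ∈ Finset.range (n + 1), qBinom q n k * x ^ k

/-- The continuous big q-Hermite polynomial `H_n(cos θ; a | q)`. -/
noncomputable def bigH (q a θ : ℂ) (n : ℕ) : ℂ :=
  ∑ k ∈ Finset.range (n + 1),
    qBinom q n k * qPoch (a * Complex.exp (Complex.I * θ)) q k *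
      Complex.exp (Complex.I * ((n : ℂ) - 2 * (k : ℂ)) * θ)

/- ### Auxiliary lemmas -/

lemma qPoch_zero' (a q : ℂ) : qPoch a q 0 = 1 := by simp [qPoch]

lemma qPoch_qq_succ (q : ℂ) (m : ℕ) :
    qPoch q q (m + 1) = qPoch q q m * (1 - q ^ (m + 1)) := by
  rw [qPoch, Finset.prod_range_succ, ← qPoch, ← pow_succ']

lemma qPoch_ne_zero (q : ℂ) (hq : ‖q‖ < 1) (n : ℕ) : qPoch q q n ≠ 0 := by
  rw [qPoch, Finset.prod_ne_zero_iff]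
  intro k _ h
  have h1 : q ^ (k + 1) = 1 := by rw [pow_succ']; linear_combination -h
  have h2 : ‖q‖ ^ (k + 1) = 1 := by rw [← norm_pow, h1, norm_one]
  have h3 : ‖q‖ ^ (k + 1) < 1 := pow_lt_one₀ (norm_nonneg q) hq (Nat.succ_ne_zero k)
  linarith

/-- Truncated Gaussian binomial: zero above the diagonal. -/
noncomputable def qB (q : ℂ) (n k : ℕ) : ℂ := if k ≤ n then qBinom q n k else 0

lemma qB_of_le (q : ℂ) {n k : ℕ} (h : k ≤ n) : qB q n k = qBinom q n k := if_pos h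

lemma qB_of_gt (q : ℂ) {n k : ℕ} (h : n < k) : qB q n k = 0 := if_neg (by omega)

lemma qB_zero_right (q : ℂ) (hq : ‖q‖ < 1) (n : ℕ) : qB q n 0 = 1 := by
  rw [qB_of_le q (Nat.zero_le n), qBinom, qPoch_zero', Nat.sub_zero, one_mul,
    div_self (qPoch_ne_zero q hq n)]

lemma qB_self (q : ℂ) (hq : ‖q‖ < 1) (n : ℕ) : qB q n n = 1 := by
  rw [qB_of_le q le_rfl, qBinom, Nat.sub_self, qPoch_zero', mul_one,
    div_self (qPoch_ne_zero q hq n)]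

lemma qB_pascal (q : ℂ) (hq : ‖q‖ < 1) {n k : ℕ} (hk : k ≤ n) :
    qB q (n + 1) (k + 1) = qB q n k + q ^ (k + 1) * qB q n (k + 1) := by
  have hne := qPoch_ne_zero q hq
  rcases eq_or_lt_of_le hk with rfl | h
  · rw [qB_self q hq, qB_self q hq, qB_of_gt q (Nat.lt_succ_self k), mul_zero, add_zero]
  · obtain ⟨a, rfl⟩ : ∃ a, n = k + 1 + a := ⟨n - k - 1, by omega⟩
    rw [qB_of_le q (by omega), qB_of_le q (by omega), qB_of_le q (by omega)]
    unfold qBinom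
    have e1 : k + 1 + a + 1 - (k + 1) = a + 1 := by omega
    have e2 : k + 1 + a - k = a + 1 := by omega
    have e3 : k + 1 + a - (k + 1) = a := by omega
    rw [e1, e2, e3]
    rw [show k + 1 + a + 1 = (k + 1 + a) + 1 from rfl, qPoch_qq_succ, qPoch_qq_succ q k,
      qPoch_qq_succ q a]
    have hk1 : (1 : ℂ) - q ^ (k + 1) ≠ 0 := by
      have := hne (k + 1); rw [qPoch_qq_succ] at this
      exact fun h => this (by rw [h, mul_zero])
    have ha1 : (1 : ℂ) - q ^ (a + 1) ≠ 0 := by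
      have := hne (a + 1); rw [qPoch_qq_succ] at this
      exact fun h => this (by rw [h, mul_zero])
    field_simp [hne]
    ring

/-- trinomial revision, form 1: `[n,i+j][i+j,j] = [n,j][n-j,i]`. -/
lemma qB_trinom2 (q : ℂ) (hq : ‖q‖ < 1) {n i j : ℕ} (h : i + j ≤ n) :
    qB q n (i + j) * qB q (i + j) j = qB q n j * qB q (n - j) i := by
  have hne := qPoch_ne_zero q hq
  rw [qB_of_le q h, qB_of_le q (Nat.le_add_left j i), qB_of_le q (by omega),
    qB_of_le q (by omega)]
  unfold qBinom
  have e1 : i + j - j = i := by omega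
  have e2 : n - j - i = n - (i + j) := by omega
  rw [e1, e2]
  field_simp [hne]

/-- trinomial revision, symmetric form: `[n,k][n-k,j] = [n,j][n-j,k]`. -/
lemma qB_trinom_sym (q : ℂ) (hq : ‖q‖ < 1) {n k j : ℕ} (hk : k ≤ n) (hj : j ≤ n) :
    qB q n k * qB q (n - k) j = qB q n j * qB q (n - j) k := by
  have hne := qPoch_ne_zero q hq
  rcases le_or_gt (k + j) n with h | h
  · rw [qB_of_le q hk, qB_of_le q (by omega : j ≤ n - k), qB_of_le q hj,
      qB_of_le q (by omega : k ≤ n - j)]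
    unfold qBinom
    have e1 : n - k - j = n - (k + j) := by omega
    have e2 : n - j - k = n - (k + j) := by omega
    rw [e1, e2]
    field_simp [hne]
  · rw [qB_of_gt q (by omega : n - k < j), qB_of_gt q (by omega : n - j < k)]
    ring

/-- shift a sum whose first `j` terms vanish. -/
lemma sum_shift (f : ℕ → ℂ) {j n : ℕ} (hj : j ≤ n) (h0 : ∀ m < j, f m = 0) :
    ∑ m ∈ Finset.range (n + 1), f m = ∑ i ∈ Finset.range (n - j + 1), f (i + j) := by
  rw [Finset.range_eq_Ico, ← Finset.sum_Ico_consecutive _ (Nat.zero_le j) (by omega : j ≤ n + 1)]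
  rw [Finset.sum_eq_zero (fun m hm => h0 m (Finset.mem_Ico.1 hm).2), zero_add,
    Finset.sum_Ico_eq_sum_range]
  rw [show n + 1 - j = n - j + 1 by omega]
  refine Finset.sum_congr (by rw [Finset.range_eq_Ico]) fun i _ => by rw [add_comm]

/-- Cauchy binomial theorem: `x^n = Σ [n,k] P_k(x,y) y^{n-k}`. -/
lemma cauchy_binom (q : ℂ) (hq : ‖q‖ < 1) (x y : ℂ) (n : ℕ) :
    x ^ n = ∑ k ∈ Finset.range (n + 1), qB q n k * cauchyP q x y k * y ^ (n - k) := by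
  induction n with
  | zero => simp [qB_self q hq 0, cauchyP]
  | succ n ih =>
    have hP : ∀ k : ℕ, x * cauchyP q x y k
        = cauchyP q x y (k + 1) + q ^ k * y * cauchyP q x y k := by
      intro k
      have : cauchyP q x y (k + 1) = cauchyP q x y k * (x - q ^ k * y) := by
        rw [cauchyP, Finset.prod_range_succ, ← cauchyP]
      rw [this]; ring
    have step1 : x ^ (n + 1)
        = (∑ k ∈ Finset.range (n + 1), qB q n k * cauchyP q x y (k + 1) * y ^ (n - k))
        + (∑ k ∈ Finset.range (n + 1), q ^ k * qB q n k * cauchyP q x y k * y ^ (n + 1 - k)) := by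
      rw [pow_succ, ih, Finset.sum_mul, ← Finset.sum_add_distrib]
      refine Finset.sum_congr rfl fun k hk => ?_
      rw [Finset.mem_range] at hk
      have hy : y ^ (n + 1 - k) = y ^ (n - k) * y := by
        rw [← pow_succ, show n + 1 - k = n - k + 1 by omega]
      rw [hy]
      calc qB q n k * cauchyP q x y k * y ^ (n - k) * x
          = qB q n k * (x * cauchyP q x y k) * y ^ (n - k) := by ring
        _ = qB q n k * (cauchyP q x y (k + 1) + q ^ k * y * cauchyP q x y k) * y ^ (n - k) := by
            rw [hP]
        _ = _ := by ring
    rw [step1]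
    rw [Finset.sum_range_succ' (fun k => qB q (n + 1) k * cauchyP q x y k * y ^ (n + 1 - k)) (n + 1)]
    have hfirst : ∀ k ∈ Finset.range (n + 1),
        qB q (n + 1) (k + 1) * cauchyP q x y (k + 1) * y ^ (n + 1 - (k + 1))
        = qB q n k * cauchyP q x y (k + 1) * y ^ (n - k)
          + q ^ (k + 1) * qB q n (k + 1) * cauchyP q x y (k + 1) * y ^ (n - k) := by
      intro k hk
      rw [Finset.mem_range] at hk
      rw [qB_pascal q hq (by omega), Nat.succ_sub_succ]
      ring
    rw [Finset.sum_congr rfl hfirst, Finset.sum_add_distrib]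
    have hsecond : ∑ k ∈ Finset.range (n + 1), q ^ k * qB q n k * cauchyP q x y k * y ^ (n + 1 - k)
        = (∑ k ∈ Finset.range (n + 1),
            q ^ (k + 1) * qB q n (k + 1) * cauchyP q x y (k + 1) * y ^ (n - k))
          + qB q (n + 1) 0 * cauchyP q x y 0 * y ^ (n + 1 - 0) := by
      rw [Finset.sum_range_succ' (fun k => q ^ k * qB q n k * cauchyP q x y k * y ^ (n + 1 - k)) n]
      rw [Finset.sum_range_succ (fun k =>
        q ^ (k + 1) * qB q n (k + 1) * cauchyP q x y (k + 1) * y ^ (n - k)) n]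
      rw [qB_of_gt q (Nat.lt_succ_self n), qB_zero_right q hq, qB_zero_right q hq]
      simp only [Nat.succ_sub_succ, pow_zero, one_mul, mul_zero, zero_mul, add_zero]
    rw [hsecond]
    ring

/-- Expansion of the Rogers–Szegő polynomials in terms of the bivariate ones. -/
theorem hRS_eq_sum_hRS2 (q x y : ℂ) (hq : ‖q‖ < 1) (n : ℕ) :
    hRS q x n = ∑ k ∈ Finset.range (n + 1), qBinom q n k * y ^ k * hRS2 q x y (n - k) := by
  have hx : ∀ m, m ≤ n → x ^ m
      = ∑ j ∈ Finset.range (n + 1), qB q m j * cauchyP q x y j * y ^ (m - j) := by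
    intro m hm
    rw [cauchy_binom q hq x y m]
    refine Finset.sum_subset (Finset.range_subset_range.2 (by omega)) ?_
    intro j _ hj
    rw [Finset.mem_range, not_lt] at hj
    rw [qB_of_gt q (by omega), zero_mul, zero_mul]
  have hyRS : ∀ j, j ≤ n →
      ∑ k ∈ Finset.range (n + 1), qB q (n - j) k * y ^ k = hRS q y (n - j) := by
    intro j hj
    have h1 : ∑ k ∈ Finset.range (n - j + 1), qB q (n - j) k * y ^ k
        = ∑ k ∈ Finset.range (n + 1), qB q (n - j) k * y ^ k := by
      refine Finset.sum_subset (Finset.range_subset_range.2 (by omega)) fun k _ hk => ?_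
      rw [Finset.mem_range, not_lt] at hk
      rw [qB_of_gt q (by omega), zero_mul]
    rw [← h1, hRS]
    refine Finset.sum_congr rfl fun k hk => ?_
    rw [Finset.mem_range] at hk
    rw [qB_of_le q (by omega : k ≤ n - j)]
  have hL : hRS q x n = ∑ j ∈ Finset.range (n + 1),
      qB q n j * cauchyP q x y j * hRS q y (n - j) := by
    rw [hRS]
    calc ∑ m ∈ Finset.range (n + 1), qBinom q n m * x ^ m
        = ∑ m ∈ Finset.range (n + 1), ∑ j ∈ Finset.range (n + 1),
            qB q n m * (qB q m j * cauchyP q x y j * y ^ (m - j)) := by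
          refine Finset.sum_congr rfl fun m hm => ?_
          rw [Finset.mem_range] at hm
          rw [← qB_of_le q (show m ≤ n by omega), hx m (by omega), Finset.mul_sum]
      _ = ∑ j ∈ Finset.range (n + 1), ∑ m ∈ Finset.range (n + 1),
            qB q n m * (qB q m j * cauchyP q x y j * y ^ (m - j)) := Finset.sum_comm
      _ = ∑ j ∈ Finset.range (n + 1), qB q n j * cauchyP q x y j * hRS q y (n - j) := by
          refine Finset.sum_congr rfl fun j hj => ?_
          rw [Finset.mem_range] at hj
          rw [sum_shift _ (show j ≤ n by omega) (fun m hm => by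
            simp [qB_of_gt q hm])]
          have e : ∀ i ∈ Finset.range (n - j + 1),
              qB q n (i + j) * (qB q (i + j) j * cauchyP q x y j * y ^ (i + j - j))
              = qB q n j * cauchyP q x y j * (qB q (n - j) i * y ^ i) := by
            intro i hi
            rw [Finset.mem_range] at hi
            rw [Nat.add_sub_cancel]
            have ht := qB_trinom2 q hq (show i + j ≤ n by omega)
            calc qB q n (i + j) * (qB q (i + j) j * cauchyP q x y j * y ^ i)
                = (qB q n (i + j) * qB q (i + j) j) * cauchyP q x y j * y ^ i := by ring
              _ = (qB q n j * qB q (n - j) i) * cauchyP q x y j * y ^ i := by rw [ht]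
              _ = _ := by ring
          rw [Finset.sum_congr rfl e, ← Finset.mul_sum, hRS]
          congr 1
          refine Finset.sum_congr rfl fun i hi => ?_
          rw [Finset.mem_range] at hi
          rw [qB_of_le q (show i ≤ n - j by omega)]
  have hR : (∑ k ∈ Finset.range (n + 1), qBinom q n k * y ^ k * hRS2 q x y (n - k))
      = ∑ j ∈ Finset.range (n + 1), qB q n j * cauchyP q x y j * hRS q y (n - j) := by
    calc ∑ k ∈ Finset.range (n + 1), qBinom q n k * y ^ k * hRS2 q x y (n - k)
        = ∑ k ∈ Finset.range (n + 1), ∑ j ∈ Finset.range (n + 1),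
            qB q n k * y ^ k * (qB q (n - k) j * cauchyP q x y j) := by
          refine Finset.sum_congr rfl fun k hk => ?_
          rw [Finset.mem_range] at hk
          rw [← qB_of_le q (show k ≤ n by omega), hRS2, Finset.mul_sum]
          have e1 : ∀ j ∈ Finset.range (n - k + 1),
              qB q n k * y ^ k * (qBinom q (n - k) j * cauchyP q x y j)
              = qB q n k * y ^ k * (qB q (n - k) j * cauchyP q x y j) := by
            intro j hj
            rw [Finset.mem_range] at hj
            rw [qB_of_le q (show j ≤ n - k by omega)]
          rw [Finset.sum_congr rfl e1]
          refine Finset.sum_subset (Finset.range_subset_range.2 (by omega)) fun j _ hj => ?_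
          rw [Finset.mem_range, not_lt] at hj
          rw [qB_of_gt q (show n - k < j by omega), zero_mul, mul_zero]
      _ = ∑ j ∈ Finset.range (n + 1), ∑ k ∈ Finset.range (n + 1),
            qB q n k * y ^ k * (qB q (n - k) j * cauchyP q x y j) := Finset.sum_comm
      _ = ∑ j ∈ Finset.range (n + 1), qB q n j * cauchyP q x y j * hRS q y (n - j) := by
          refine Finset.sum_congr rfl fun j hj => ?_
          rw [Finset.mem_range] at hj
          have e2 : ∀ k ∈ Finset.range (n + 1),
              qB q n k * y ^ k * (qB q (n - k) j * cauchyP q x y j)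
              = qB q n j * cauchyP q x y j * (qB q (n - j) k * y ^ k) := by
            intro k hk
            rw [Finset.mem_range] at hk
            have ht := qB_trinom_sym q hq (show k ≤ n by omega) (show j ≤ n by omega)
            calc qB q n k * y ^ k * (qB q (n - k) j * cauchyP q x y j)
                = (qB q n k * qB q (n - k) j) * cauchyP q x y j * y ^ k := by ring
              _ = (qB q n j * qB q (n - j) k) * cauchyP q x y j * y ^ k := by rw [ht]
              _ = _ := by ring
          rw [Finset.sum_congr rfl e2, ← Finset.mul_sum, hyRS j (by omega)]
  rw [hL]
  exact hR.symm
end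

section
/- Inverse expansion of the bivariate Rogers–Szegő polynomials in terms of the classical ones: for every q ∈ ℂ with |q| < 1, all x, y ∈ ℂ, and every integer n ≥ 0, h_n(x,y|q) = ∑_{k=0}^{n} [n,k]_q (-1)^k q^{k(k-1)/2} y^k h_{n-k}(x|q). -/
lemma qPoch_succ (a q : ℂ) (n : ℕ) :
    qPoch a q (n + 1) = qPoch a q n * (1 - a * q ^ n) := by
  simp [qPoch, Finset.prod_range_succ]

lemma one_sub_ne {q : ℂ} (hq : ‖q‖ < 1) (k : ℕ) : (1 : ℂ) - q * q ^ k ≠ 0 := by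
  intro h
  have h1 : q * q ^ k = 1 := by linear_combination -h
  have : ‖q * q ^ k‖ < 1 := by
    calc ‖q * q ^ k‖ = ‖q‖ * ‖q‖ ^ k := by simp
    _ ≤ ‖q‖ * 1 := by
        gcongr
        exact pow_le_one₀ (norm_nonneg q) hq.le
    _ < 1 := by simpa using hq
  rw [h1] at this; simp at this

lemma qPoch_ne {q : ℂ} (hq : ‖q‖ < 1) (n : ℕ) : qPoch q q n ≠ 0 := by
  unfold qPoch
  exact Finset.prod_ne_zero_iff.2 fun k _ => one_sub_ne hq k

lemma qBinom_add (q : ℂ) (a b : ℕ) :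
    qBinom q (a + b) a = qPoch q q (a + b) / (qPoch q q a * qPoch q q b) := by
  simp [qBinom]

noncomputable def B (q : ℂ) (n k : ℕ) : ℂ := if k ≤ n then qBinom q n k else 0

lemma B_zero_right {q : ℂ} (hq : ‖q‖ < 1) (n : ℕ) : B q n 0 = 1 := by
  have h := qPoch_ne hq n
  simp only [B, Nat.zero_le, if_true, qBinom, Nat.sub_zero]
  rw [show qPoch q q 0 = 1 by simp [qPoch], one_mul, div_self h]

lemma B_self {q : ℂ} (hq : ‖q‖ < 1) (n : ℕ) : B q n n = 1 := by
  have h := qPoch_ne hq n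
  simp only [B, le_refl, if_true, qBinom, Nat.sub_self]
  rw [show qPoch q q 0 = 1 by simp [qPoch], mul_one, div_self h]

lemma B_eq_zero (q : ℂ) {n k : ℕ} (h : n < k) : B q n k = 0 := by
  simp [B, Nat.not_le.2 h]

lemma B_pascal {q : ℂ} (hq : ‖q‖ < 1) (n j : ℕ) :
    B q (n + 1) (j + 1) = B q n (j + 1) + q ^ (n - j) * B q n j := by
  rcases lt_trichotomy j n with h | rfl | h
  · -- j < n
    obtain ⟨d, rfl⟩ : ∃ d, n = j + 1 + d := ⟨n - (j+1), by omega⟩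
    have h1 : j + 1 ≤ j + 1 + d + 1 := by omega
    have h2 : j + 1 ≤ j + 1 + d := by omega
    have h3 : j ≤ j + 1 + d := by omega
    simp only [B, if_pos h1, if_pos h2, if_pos h3]
    rw [show j + 1 + d + 1 = (j+1) + (d+1) from by omega, qBinom_add,
]
    have e2 : qBinom q (j+1+d) (j+1) = qPoch q q (j+1+d) / (qPoch q q (j+1) * qPoch q q d) := by
      rw [show j+1+d = (j+1)+d from rfl, qBinom_add]
    have e3 : qBinom q (j+1+d) j = qPoch q q (j+1+d) / (qPoch q q j * qPoch q q (d+1)) := by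
      rw [show j+1+d = j+(d+1) from by omega, qBinom_add]
    rw [e2, e3, show (j:ℕ) + 1 + d - j = d + 1 from by omega]
    simp only [show (j:ℕ) + 1 + (d + 1) = j + d + 1 + 1 from by omega,
        show (j:ℕ) + 1 + d = j + d + 1 from by omega, qPoch_succ]
    have nj := qPoch_ne hq j
    have nd := qPoch_ne hq d
    have njd := qPoch_ne hq (j + d)
    have f1 := one_sub_ne hq j
    have f2 := one_sub_ne hq d
    have f3 := one_sub_ne hq (j + d + 1)
    field_simp
    ring
  · -- j = n
    rw [B_self hq, B_eq_zero q (by omega), B_self hq]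
    simp
  · rw [B_eq_zero q (by omega), B_eq_zero q (by omega), B_eq_zero q (by omega)]
    simp

lemma tri (j : ℕ) : (j + 1) * j / 2 = j * (j - 1) / 2 + j := by
  rw [← Nat.choose_two_right j,
    ← show (j + 1).choose 2 = (j + 1) * j / 2 by simpa using Nat.choose_two_right (j + 1),
    Nat.choose_succ_succ, Nat.choose_one_right]
  simp only [Nat.succ_eq_add_one, Nat.reduceAdd]
  omega

lemma cauchy_eq {q : ℂ} (hq : ‖q‖ < 1) (x y : ℂ) (n : ℕ) :
    cauchyP q x y n = ∑ j ∈ Finset.range (n + 1),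
      B q n j * (q ^ (j * (j - 1) / 2) * (-1) ^ j * y ^ j) * x ^ (n - j) := by
  induction n with
  | zero => simp [cauchyP, B_zero_right hq]
  | succ n ih =>
    have hc : cauchyP q x y (n + 1) = cauchyP q x y n * (x - q ^ n * y) := by
      simp [cauchyP, Finset.prod_range_succ]
    rw [hc, ih]
    symm
    rw [Finset.sum_range_succ' (fun j => B q (n+1) j * (q ^ (j * (j - 1) / 2) * (-1) ^ j * y ^ j) * x ^ (n + 1 - j))]
    have hS : ∀ j ∈ Finset.range (n + 1),
        B q (n+1) (j+1) * (q ^ ((j+1) * j / 2) * (-1) ^ (j+1) * y ^ (j+1)) * x ^ (n + 1 - (j+1))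
        = B q n (j+1) * (q ^ ((j+1) * ((j+1) - 1) / 2) * (-1) ^ (j+1) * y ^ (j+1)) * x ^ (n - j)
          + B q n j * (q ^ (j * (j - 1) / 2) * (-1) ^ j * y ^ j) * x ^ (n - j) * (-(q ^ n * y)) := by
      intro j hj
      rw [Finset.mem_range] at hj
      obtain ⟨d, rfl⟩ : ∃ d, n = j + d := ⟨n - j, by omega⟩
      rw [B_pascal hq, show (j:ℕ) + d - j = d from by omega,
          show (j:ℕ) + d + 1 - (j + 1) = d from by omega,
          show ((j:ℕ)+1) - 1 = j from rfl, tri, pow_add, pow_add]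
      ring
    simp only [Nat.add_sub_cancel] at hS ⊢
    rw [Finset.sum_congr rfl hS, Finset.sum_add_distrib]
    have hS1 : (∑ j ∈ Finset.range (n + 1),
        B q n (j+1) * (q ^ ((j+1) * j / 2) * (-1) ^ (j+1) * y ^ (j+1)) * x ^ (n - j))
        + B q (n+1) 0 * (q ^ (0 * (0 - 1) / 2) * (-1) ^ 0 * y ^ 0) * x ^ (n + 1 - 0)
        = ∑ j ∈ Finset.range (n + 1),
          B q n j * (q ^ (j * (j - 1) / 2) * (-1) ^ j * y ^ j) * x ^ (n - j) * x := by
      rw [Finset.sum_range_succ (fun j => B q n (j+1) * (q ^ ((j+1) * j / 2) * (-1) ^ (j+1) * y ^ (j+1)) * x ^ (n - j)),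
          B_eq_zero q (Nat.lt_succ_self n)]
      rw [Finset.sum_range_succ' (fun j => B q n j * (q ^ (j * (j - 1) / 2) * (-1) ^ j * y ^ j) * x ^ (n - j) * x)]
      simp only [B_zero_right hq, Nat.sub_zero, pow_zero, Nat.add_sub_cancel]
      have : ∀ j ∈ Finset.range n,
          B q n (j+1) * (q ^ ((j+1) * j / 2) * (-1) ^ (j+1) * y ^ (j+1)) * x ^ (n - j)
          = B q n (j+1) * (q ^ ((j+1) * ((j+1) - 1) / 2) * (-1) ^ (j+1) * y ^ (j+1)) * x ^ (n - (j+1)) * x := by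
        intro j hj
        rw [Finset.mem_range] at hj
        rw [show ((j:ℕ)+1) - 1 = j from rfl, show x ^ (n - j) = x ^ (n - (j+1)) * x by
          rw [← pow_succ]; congr 1; omega]
        ring
      rw [Finset.sum_congr rfl this]
      simp only [Nat.add_sub_cancel]
      ring
    calc (∑ j ∈ Finset.range (n + 1),
            B q n (j+1) * (q ^ ((j+1) * j / 2) * (-1) ^ (j+1) * y ^ (j+1)) * x ^ (n - j))
          + (∑ j ∈ Finset.range (n + 1),
            B q n j * (q ^ (j * (j - 1) / 2) * (-1) ^ j * y ^ j) * x ^ (n - j) * (-(q ^ n * y)))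
          + B q (n+1) 0 * (q ^ (0 * (0 - 1) / 2) * (-1) ^ 0 * y ^ 0) * x ^ (n + 1 - 0)
        = (∑ j ∈ Finset.range (n + 1),
            B q n j * (q ^ (j * (j - 1) / 2) * (-1) ^ j * y ^ j) * x ^ (n - j) * x)
          + (∑ j ∈ Finset.range (n + 1),
            B q n j * (q ^ (j * (j - 1) / 2) * (-1) ^ j * y ^ j) * x ^ (n - j) * (-(q ^ n * y))) := by
          rw [← hS1]; ring
      _ = (∑ j ∈ Finset.range (n + 1),
            B q n j * (q ^ (j * (j - 1) / 2) * (-1) ^ j * y ^ j) * x ^ (n - j)) * (x - q ^ n * y) := by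
          rw [← Finset.sum_mul, ← Finset.sum_mul, ← mul_add]; ring

lemma trinom {q : ℂ} (hq : ‖q‖ < 1) (j m d : ℕ) :
    qBinom q (j + m + d) (j + m) * qBinom q (j + m) j
      = qBinom q (j + m + d) j * qBinom q (m + d) m := by
  have e1 : qBinom q (j + m + d) (j + m)
      = qPoch q q (j + m + d) / (qPoch q q (j + m) * qPoch q q d) := qBinom_add q (j + m) d
  have e2 : qBinom q (j + m) j = qPoch q q (j + m) / (qPoch q q j * qPoch q q m) :=
    qBinom_add q j m
  have e3 : qBinom q (j + m + d) j
      = qPoch q q (j + m + d) / (qPoch q q j * qPoch q q (m + d)) := by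
    rw [show j + m + d = j + (m + d) from by omega, qBinom_add]
  have e4 : qBinom q (m + d) m = qPoch q q (m + d) / (qPoch q q m * qPoch q q d) :=
    qBinom_add q m d
  rw [e1, e2, e3, e4]
  have n1 := qPoch_ne hq j
  have n2 := qPoch_ne hq m
  have n3 := qPoch_ne hq d
  have n4 := qPoch_ne hq (j + m)
  have n5 := qPoch_ne hq (m + d)
  field_simp


/-- Inverse expansion of the bivariate Rogers–Szegő polynomials in terms of the
classical ones. -/
theorem hRS2_eq_sum_hRS (q x y : ℂ) (hq : ‖q‖ < 1) (n : ℕ) :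
    hRS2 q x y n =
      ∑ k ∈ Finset.range (n + 1),
        qBinom q n k * (-1 : ℂ) ^ k * q ^ (k * (k - 1) / 2) * y ^ k * hRS q x (n - k) := by
  rw [hRS2]
  have step1 : ∀ k ∈ Finset.range (n + 1), qBinom q n k * cauchyP q x y k
      = ∑ j ∈ Finset.range (n + 1),
          qBinom q n k * (B q k j * (q ^ (j * (j - 1) / 2) * (-1) ^ j * y ^ j) * x ^ (k - j)) := by
    intro k hk
    rw [Finset.mem_range] at hk
    rw [cauchy_eq hq x y k,
      Finset.sum_subset (Finset.range_subset_range.2 (by omega : k + 1 ≤ n + 1))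
        (by
          intro jj _ hjj
          rw [Finset.mem_range, not_lt] at hjj
          rw [B_eq_zero q (by omega)]
          ring),
      Finset.mul_sum]
  rw [Finset.sum_congr rfl step1, Finset.sum_comm]
  apply Finset.sum_congr rfl
  intro j hj
  rw [Finset.mem_range] at hj
  simp only [hRS]
  rw [show n - j + 1 = n + 1 - j from by omega, Finset.mul_sum]
  have hsub : Finset.Ico j (n + 1) ⊆ Finset.range (n + 1) := by
    intro k hk
    rw [Finset.mem_Ico] at hk
    exact Finset.mem_range.2 hk.2
  rw [← Finset.sum_subset hsub (by
    intro k hk hk2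
    rw [Finset.mem_range] at hk
    rw [Finset.mem_Ico, not_and_or, not_le] at hk2
    have : k < j := by omega
    rw [B_eq_zero q this]
    ring)]
  rw [Finset.sum_Ico_eq_sum_range]
  apply Finset.sum_congr rfl
  intro m hm
  rw [Finset.mem_range] at hm
  obtain ⟨d, hd⟩ : ∃ d, n = j + m + d := ⟨n - j - m, by omega⟩
  subst hd
  rw [show j + m - j = m from by omega, show j + m + d - j = m + d from by omega,
    show B q (j + m) j = qBinom q (j + m) j from if_pos (by omega)]
  have := trinom hq j m d
  linear_combination ((-1 : ℂ) ^ j * q ^ (j * (j - 1) / 2) * y ^ j * x ^ m) * this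
end
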